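/- Let j ≥ 0 be an integer and let w : ℝ² → ℝ be continuously differentiable. Suppose u₀ ∈ Q_j satisfies ∫_K (w − u₀) p dx dy = 0 for every p ∈ Q_j; suppose for each m ∈ {1,2,3,4} that u_{b,m} is a polynomial of degree ≤ j in the coordinate running along F_m with ∫_{F_m} (w − u_{b,m}) p ds = 0 for every univariate polynomial p of degree ≤ j; and suppose G ∈ RT_j(K) satisfies ∫_K G·q dx dy = −∫_K u₀ (div q) dx dy + Σ_{m=1}^{4} ∫_{F_m} u_{b,m} (q·n_m) ds for every q ∈ RT_j(K). Then ∫_K (G − ∇w)·q dx dy = 0 for every q ∈ RT_j(K); that is, G is the L² projection of ∇w onto RT_j(K). -/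

import Mathlib

open MeasureTheory MvPolynomial

noncomputable section

/-- Real polynomials in two variables. -/
abbrev Poly2 := MvPolynomial (Fin 2) ℝ

/-- Evaluate a two-variable polynomial at `(x, y)`. -/
def evalP (p : Poly2) (x y : ℝ) : ℝ := MvPolynomial.eval ![x, y] p

/-- `Q_{r,s}`: degree `≤ r` in the first variable and `≤ s` in the second. -/
def memQ (r s : ℕ) (p : Poly2) : Prop := p.degreeOf 0 ≤ r ∧ p.degreeOf 1 ≤ s

/-- The divergence of a polynomial vector field. -/
def divP (q : Poly2 × Poly2) : Poly2 := pderiv 0 q.1 + pderiv 1 q.2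

/-- The Raviart–Thomas space `RT_j(K) = Q_{j+1,j} × Q_{j,j+1}`. -/
def memRT (j : ℕ) (q : Poly2 × Poly2) : Prop := memQ (j+1) j q.1 ∧ memQ j (j+1) q.2

/-!
Integrating by parts on `K`, `∫_K ∇w·q = -∫_K w div q + Σₘ ∫_{F_m} w (q·n_m)`. For `q ∈ RT_j(K)`,
`div q ∈ Q_j` and each normal trace `q·n_m` is a polynomial of degree `≤ j` along `F_m`, so the
projection properties of `u₀` and of the `u_{b,m}` allow replacing `w` by `u₀` in the volume term
and by `u_{b,m}` in the edge terms. What is left is the right-hand side of the equation defining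
`G`.
-/

namespace MvPolynomial

theorem hasFDerivAt_eval {σ 𝕜 : Type*} [Fintype σ] [NontriviallyNormedField 𝕜]
    (p : MvPolynomial σ 𝕜) (x : σ → 𝕜) :
    HasFDerivAt (fun x => eval x p)
      (∑ i, eval x (pderiv i p) • (ContinuousLinearMap.proj i : (σ → 𝕜) →L[𝕜] 𝕜)) x := by
  classical
  induction p using MvPolynomial.induction_on with
  | C a =>
    simp only [eval_C]
    exact (hasFDerivAt_const a x).congr_fderiv (by ext; simp)
  | add p q hp hq =>
    simp only [map_add]
    exact (hp.add hq).congr_fderiv (by ext; simp [add_mul, Finset.sum_add_distrib])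
  | mul_X p i hp =>
    simp only [map_mul, eval_X]
    refine (hp.mul (hasFDerivAt_apply i x)).congr_fderiv ?_
    ext v
    simp [pderiv_X, Pi.single_apply, apply_ite (eval x), Finset.sum_add_distrib, add_mul,
      Finset.mul_sum, mul_assoc]

variable {σ R : Type*} [CommRing R]

theorem add_single_mem_support_of_mem_support_pderiv {p : MvPolynomial σ R} {k : σ}
    {m : σ →₀ ℕ} (hm : m ∈ (pderiv k p).support) : m + Finsupp.single k 1 ∈ p.support := by
  rw [mem_support_iff, coeff_pderiv] at hm
  exact mem_support_iff.mpr (left_ne_zero_of_mul hm)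

theorem degreeOf_pderiv_le (i k : σ) (p : MvPolynomial σ R) :
    degreeOf i (pderiv k p) ≤ degreeOf i p :=
  degreeOf_le_iff.mpr fun m hm =>
    (by simp : m i ≤ (m + Finsupp.single k 1 : σ →₀ ℕ) i).trans
      (monomial_le_degreeOf i (add_single_mem_support_of_mem_support_pderiv hm))

theorem degreeOf_pderiv_self_le (i : σ) (p : MvPolynomial σ R) :
    degreeOf i (pderiv i p) ≤ degreeOf i p - 1 :=
  degreeOf_le_iff.mpr fun m hm => by
    have := monomial_le_degreeOf i (add_single_mem_support_of_mem_support_pderiv hm)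
    simp only [Finsupp.add_apply, Finsupp.single_eq_same] at this
    omega

variable [DecidableEq σ]

theorem eval_aeval_update_X (p : MvPolynomial σ R) (i : σ) (z : σ → R) (t : R) :
    (aeval (Function.update (fun k => Polynomial.C (z k)) i Polynomial.X) p).eval t =
      eval (Function.update z i t) p := by
  induction p using MvPolynomial.induction_on with
  | C a => simp
  | add p q hp hq => simp [hp, hq]
  | mul_X p k hp =>
    by_cases hk : k = i
    · subst hk; simp [hp]
    · simp [hp, hk]

theorem natDegree_aeval_update_X_le (p : MvPolynomial σ R) (i : σ) (z : σ → R) :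
    (aeval (Function.update (fun k => Polynomial.C (z k)) i Polynomial.X) p).natDegree ≤
      degreeOf i p := by
  rw [aeval_def, eval₂_eq]
  refine Polynomial.natDegree_sum_le_of_forall_le _ _ fun d hd => ?_
  rw [Polynomial.algebraMap_apply, Algebra.algebraMap_self, RingHom.id_apply]
  refine (Polynomial.natDegree_C_mul_le _ _).trans ((Polynomial.natDegree_prod_le _ _).trans ?_)
  calc _ ≤ ∑ k ∈ d.support, if i = k then d k else 0 := by
        refine Finset.sum_le_sum fun k _ => Polynomial.natDegree_pow_le.trans ?_
        by_cases hk : i = k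
        · subst hk; simpa using Nat.mul_le_mul_left (d i) (Polynomial.natDegree_X_le (R := R))
        · simp [hk, Ne.symm hk]
    _ ≤ d i := by rw [Finset.sum_ite_eq]; split_ifs <;> simp
    _ ≤ degreeOf i p := monomial_le_degreeOf i hd

end MvPolynomial

open Set in
theorem integral_fderiv_mul_add_integral_mul_divergence {w f g : ℝ × ℝ → ℝ}
    (hw : ContDiff ℝ 1 w) (hf : ContDiff ℝ 1 f) (hg : ContDiff ℝ 1 g) {a b : ℝ × ℝ}
    (hab : a ≤ b) :
    (∫ z in Icc a b, (fderiv ℝ w z (1, 0) * f z + fderiv ℝ w z (0, 1) * g z)) +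
        ∫ z in Icc a b, w z * (fderiv ℝ f z (1, 0) + fderiv ℝ g z (0, 1)) =
      (((∫ x in a.1..b.1, w (x, b.2) * g (x, b.2)) - ∫ x in a.1..b.1, w (x, a.2) * g (x, a.2)) +
          ∫ y in a.2..b.2, w (b.1, y) * f (b.1, y)) - ∫ y in a.2..b.2, w (a.1, y) * f (a.1, y) := by
  have hint : ∀ {h : ℝ × ℝ → ℝ}, Continuous h → IntegrableOn h (Icc a b) :=
    fun hc => hc.continuousOn.integrableOn_compact isCompact_Icc
  have hcont : ∀ {u : ℝ × ℝ → ℝ}, ContDiff ℝ 1 u → ∀ v, Continuous fun z => fderiv ℝ u z v :=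
    fun hu v => (hu.continuous_fderiv one_ne_zero).clm_apply continuous_const
  have hprod : ∀ z, fderiv ℝ (fun z => w z * f z) z (1, 0) + fderiv ℝ (fun z => w z * g z) z (0, 1)
      = (fderiv ℝ w z (1, 0) * f z + fderiv ℝ w z (0, 1) * g z)
        + w z * (fderiv ℝ f z (1, 0) + fderiv ℝ g z (0, 1)) := by
    intro z
    rw [fderiv_fun_mul (hw.differentiable one_ne_zero z) (hf.differentiable one_ne_zero z),
      fderiv_fun_mul (hw.differentiable one_ne_zero z) (hg.differentiable one_ne_zero z)]
    simp only [FunLike.coe_add, FunLike.coe_smul, Pi.add_apply, Pi.smul_apply, smul_eq_mul]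
    ring
  have hcwd : Continuous fun z => fderiv ℝ w z (1, 0) * f z + fderiv ℝ w z (0, 1) * g z :=
    ((hcont hw (1, 0)).mul hf.continuous).add ((hcont hw (0, 1)).mul hg.continuous)
  have hcdiv : Continuous fun z => w z * (fderiv ℝ f z (1, 0) + fderiv ℝ g z (0, 1)) :=
    hw.continuous.mul ((hcont hf (1, 0)).add (hcont hg (0, 1)))
  rw [← integral_add (hint hcwd) (hint hcdiv), ← funext hprod]
  exact integral_divergence_prod_Icc_of_hasFDerivAt_of_le (fun z => w z * f z) (fun z => w z * g z)
    _ _ a b hab (hw.continuous.mul hf.continuous).continuousOn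
    (hw.continuous.mul hg.continuous).continuousOn
    (fun z _ => ((hw.mul hf).differentiable one_ne_zero z).hasFDerivAt)
    (fun z _ => ((hw.mul hg).differentiable one_ne_zero z).hasFDerivAt)
    (by rw [funext hprod]; exact hint (hcwd.add hcdiv))

theorem setIntegral_mul_eq_of_setIntegral_sub_mul_eq_zero {X : Type*} [TopologicalSpace X]
    [T2Space X] [MeasurableSpace X] [OpensMeasurableSpace X] {μ : Measure X}
    [IsFiniteMeasureOnCompacts μ] {s : Set X} (hs : IsCompact s) {f g h : X → ℝ}
    (hf : Continuous f) (hg : Continuous g) (hh : Continuous h)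
    (h0 : ∫ x in s, (f x - g x) * h x ∂μ = 0) :
    ∫ x in s, g x * h x ∂μ = ∫ x in s, f x * h x ∂μ := by
  have hfh : IntegrableOn (fun x => f x * h x) s μ :=
    (hf.mul hh).continuousOn.integrableOn_compact hs
  have hgh : IntegrableOn (fun x => g x * h x) s μ :=
    (hg.mul hh).continuousOn.integrableOn_compact hs
  rw [eq_comm, ← sub_eq_zero, ← integral_sub hfh hgh]
  simpa only [sub_mul] using h0

theorem intervalIntegral_eval_mul_eq_of_forall_natDegree_le {f : ℝ → ℝ} (hf : Continuous f)
    {u : Polynomial ℝ} {j : ℕ} {a b : ℝ}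
    (hu : ∀ p : Polynomial ℝ, p.natDegree ≤ j → ∫ t in a..b, (f t - u.eval t) * p.eval t = 0)
    {g : ℝ → ℝ} (hg : ∃ r : Polynomial ℝ, r.natDegree ≤ j ∧ ∀ t, r.eval t = g t) :
    ∫ t in a..b, u.eval t * g t = ∫ t in a..b, f t * g t := by
  obtain ⟨r, hrj, hr⟩ := hg
  simp only [← hr]
  have hfr : IntervalIntegrable (fun t => f t * r.eval t) volume a b :=
    (hf.mul r.continuous).intervalIntegrable _ _
  have hur : IntervalIntegrable (fun t => u.eval t * r.eval t) volume a b :=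
    (u.continuous.mul r.continuous).intervalIntegrable _ _
  rw [eq_comm, ← sub_eq_zero, ← intervalIntegral.integral_sub hfr hur]
  simpa only [sub_mul] using hu r hrj

theorem contDiff_evalP (p : Poly2) {n : WithTop ℕ∞} :
    ContDiff ℝ n fun z : ℝ × ℝ => evalP p z.1 z.2 :=
  (AnalyticOnNhd.eval_mvPolynomial p).contDiff.comp
    (ContinuousLinearEquiv.finTwoArrow ℝ ℝ).symm.contDiff

@[fun_prop]
theorem continuous_evalP (p : Poly2) : Continuous fun z : ℝ × ℝ => evalP p z.1 z.2 :=
  (contDiff_evalP p (n := 0)).continuous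

theorem fderiv_evalP_apply (p : Poly2) (z v : ℝ × ℝ) :
    fderiv ℝ (fun z : ℝ × ℝ => evalP p z.1 z.2) z v =
      evalP (pderiv 0 p) z.1 z.2 * v.1 + evalP (pderiv 1 p) z.1 z.2 * v.2 := by
  let e := (ContinuousLinearEquiv.finTwoArrow ℝ ℝ).symm
  have h : HasFDerivAt (fun z : ℝ × ℝ => evalP p z.1 z.2) _ z :=
    (hasFDerivAt_eval p (e z)).comp z e.hasFDerivAt
  rw [h.fderiv]
  simp [Fin.sum_univ_two, evalP, e]

theorem fderiv_evalP_add_fderiv_evalP_eq_evalP_divP (q : Poly2 × Poly2) (z : ℝ × ℝ) :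
    fderiv ℝ (fun z : ℝ × ℝ => evalP q.1 z.1 z.2) z (1, 0) +
        fderiv ℝ (fun z : ℝ × ℝ => evalP q.2 z.1 z.2) z (0, 1) = evalP (divP q) z.1 z.2 := by
  rw [fderiv_evalP_apply, fderiv_evalP_apply]
  simp [divP, evalP]

theorem memQ_divP {j : ℕ} {q : Poly2 × Poly2} (hq : memRT j q) : memQ j j (divP q) := by
  obtain ⟨⟨h10, h11⟩, h20, h21⟩ := hq
  exact ⟨(degreeOf_add_le _ _ _).trans (max_le ((degreeOf_pderiv_self_le 0 _).trans (by omega))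
      ((degreeOf_pderiv_le 0 1 _).trans h20)),
    (degreeOf_add_le _ _ _).trans (max_le ((degreeOf_pderiv_le 1 0 _).trans h11)
      ((degreeOf_pderiv_self_le 1 _).trans (by omega)))⟩

theorem exists_polynomial_eval_eq_evalP_left {p : Poly2} {n : ℕ} (hp : p.degreeOf 1 ≤ n)
    (x : ℝ) : ∃ r : Polynomial ℝ, r.natDegree ≤ n ∧ ∀ y, r.eval y = evalP p x y := by
  refine ⟨_, (natDegree_aeval_update_X_le p 1 ![x, 0]).trans hp, fun y => ?_⟩
  rw [eval_aeval_update_X, evalP]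
  congr
  ext k; fin_cases k <;> simp

theorem exists_polynomial_eval_eq_evalP_right {p : Poly2} {n : ℕ} (hp : p.degreeOf 0 ≤ n)
    (y : ℝ) : ∃ r : Polynomial ℝ, r.natDegree ≤ n ∧ ∀ x, r.eval x = evalP p x y := by
  refine ⟨_, (natDegree_aeval_update_X_le p 0 ![0, y]).trans hp, fun x => ?_⟩
  rw [eval_aeval_update_X, evalP]
  congr
  ext k; fin_cases k <;> simp

theorem statement2_general (j : ℕ) (x₀ x₁ y₀ y₁ : ℝ) (hx : x₀ < x₁) (hy : y₀ < y₁)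
    (w : ℝ × ℝ → ℝ) (hw : ContDiff ℝ 1 w)
    (u₀ : Poly2)
    (hu₀proj : ∀ p : Poly2, memQ j j p →
      (∫ z in Set.Icc x₀ x₁ ×ˢ Set.Icc y₀ y₁, (w z - evalP u₀ z.1 z.2) * evalP p z.1 z.2) = 0)
    (ub₁ ub₂ ub₃ ub₄ : Polynomial ℝ)
    (hub₁ : ∀ p : Polynomial ℝ, p.natDegree ≤ j →
      (∫ y in y₀..y₁, (w (x₀, y) - ub₁.eval y) * p.eval y) = 0)
    (hub₂ : ∀ p : Polynomial ℝ, p.natDegree ≤ j →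
      (∫ y in y₀..y₁, (w (x₁, y) - ub₂.eval y) * p.eval y) = 0)
    (hub₃ : ∀ p : Polynomial ℝ, p.natDegree ≤ j →
      (∫ x in x₀..x₁, (w (x, y₀) - ub₃.eval x) * p.eval x) = 0)
    (hub₄ : ∀ p : Polynomial ℝ, p.natDegree ≤ j →
      (∫ x in x₀..x₁, (w (x, y₁) - ub₄.eval x) * p.eval x) = 0)
    (G : Poly2 × Poly2)
    (hGdef : ∀ q : Poly2 × Poly2, memRT j q →
      (∫ z in Set.Icc x₀ x₁ ×ˢ Set.Icc y₀ y₁,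
        (evalP G.1 z.1 z.2 * evalP q.1 z.1 z.2 + evalP G.2 z.1 z.2 * evalP q.2 z.1 z.2))
      = -(∫ z in Set.Icc x₀ x₁ ×ˢ Set.Icc y₀ y₁, evalP u₀ z.1 z.2 * evalP (divP q) z.1 z.2)
        + ((∫ y in y₀..y₁, ub₁.eval y * (-(evalP q.1 x₀ y)))
          + (∫ y in y₀..y₁, ub₂.eval y * evalP q.1 x₁ y)
          + (∫ x in x₀..x₁, ub₃.eval x * (-(evalP q.2 x y₀)))
          + (∫ x in x₀..x₁, ub₄.eval x * evalP q.2 x y₁))) :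
    ∀ q : Poly2 × Poly2, memRT j q →
      (∫ z in Set.Icc x₀ x₁ ×ˢ Set.Icc y₀ y₁,
        ((evalP G.1 z.1 z.2 - fderiv ℝ w z (1, 0)) * evalP q.1 z.1 z.2
          + (evalP G.2 z.1 z.2 - fderiv ℝ w z (0, 1)) * evalP q.2 z.1 z.2)) = 0 := by
  intro q hq
  rw [Set.Icc_prod_Icc] at hu₀proj hGdef ⊢
  set K : Set (ℝ × ℝ) := Set.Icc (x₀, y₀) (x₁, y₁)
  have green := integral_fderiv_mul_add_integral_mul_divergence hw (contDiff_evalP q.1)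
    (contDiff_evalP q.2) (a := (x₀, y₀)) (b := (x₁, y₁)) ⟨hx.le, hy.le⟩
  simp only [fderiv_evalP_add_fderiv_evalP_eq_evalP_divP] at green
  have hvol := setIntegral_mul_eq_of_setIntegral_sub_mul_eq_zero isCompact_Icc hw.continuous
    (by fun_prop) (by fun_prop) (hu₀proj _ (memQ_divP hq))
  have hF₁ := intervalIntegral_eval_mul_eq_of_forall_natDegree_le (by fun_prop) hub₁
    (exists_polynomial_eval_eq_evalP_left hq.1.2 x₀)
  have hF₂ := intervalIntegral_eval_mul_eq_of_forall_natDegree_le (by fun_prop) hub₂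
    (exists_polynomial_eval_eq_evalP_left hq.1.2 x₁)
  have hF₃ := intervalIntegral_eval_mul_eq_of_forall_natDegree_le (by fun_prop) hub₃
    (exists_polynomial_eval_eq_evalP_right hq.2.1 y₀)
  have hF₄ := intervalIntegral_eval_mul_eq_of_forall_natDegree_le (by fun_prop) hub₄
    (exists_polynomial_eval_eq_evalP_right hq.2.1 y₁)
  have hG := hGdef q hq
  simp only [mul_neg, intervalIntegral.integral_neg] at hG
  have hcdw := hw.continuous_fderiv one_ne_zero
  have hK : ∀ {h : ℝ × ℝ → ℝ}, Continuous h → IntegrableOn h K :=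
    fun hc => hc.continuousOn.integrableOn_compact isCompact_Icc
  calc _ = ∫ z in K,
          ((evalP G.1 z.1 z.2 * evalP q.1 z.1 z.2 + evalP G.2 z.1 z.2 * evalP q.2 z.1 z.2) -
            (fderiv ℝ w z (1, 0) * evalP q.1 z.1 z.2 + fderiv ℝ w z (0, 1) * evalP q.2 z.1 z.2)) :=
        by congr 1; ext z; ring
    _ = _ := integral_sub (hK (by fun_prop)) (hK (by fun_prop))
    _ = 0 := by linarith

/-- If `u₀` is the `L²(K)`-projection of `w` onto `Q_j`, each `u_{b,m}` is the
`L²(F_m)`-projection of `w` onto polynomials of degree `≤ j` on the edge `F_m`, and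
`G ∈ RT_j(K)` is the associated discrete weak gradient, then `G` is the `L²`-projection of
`∇w` onto `RT_j(K)`. -/
theorem statement2 (j : ℕ) (x₀ x₁ y₀ y₁ : ℝ) (hx : x₀ < x₁) (hy : y₀ < y₁)
    (w : ℝ × ℝ → ℝ) (hw : ContDiff ℝ 1 w)
    (u₀ : Poly2) (hu₀ : memQ j j u₀)
    (hu₀proj : ∀ p : Poly2, memQ j j p →
      (∫ z in Set.Icc x₀ x₁ ×ˢ Set.Icc y₀ y₁, (w z - evalP u₀ z.1 z.2) * evalP p z.1 z.2) = 0)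
    (ub₁ ub₂ ub₃ ub₄ : Polynomial ℝ)
    (hb₁ : ub₁.natDegree ≤ j) (hb₂ : ub₂.natDegree ≤ j)
    (hb₃ : ub₃.natDegree ≤ j) (hb₄ : ub₄.natDegree ≤ j)
    (hub₁ : ∀ p : Polynomial ℝ, p.natDegree ≤ j →
      (∫ y in y₀..y₁, (w (x₀, y) - ub₁.eval y) * p.eval y) = 0)
    (hub₂ : ∀ p : Polynomial ℝ, p.natDegree ≤ j →
      (∫ y in y₀..y₁, (w (x₁, y) - ub₂.eval y) * p.eval y) = 0)
    (hub₃ : ∀ p : Polynomial ℝ, p.natDegree ≤ j →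
      (∫ x in x₀..x₁, (w (x, y₀) - ub₃.eval x) * p.eval x) = 0)
    (hub₄ : ∀ p : Polynomial ℝ, p.natDegree ≤ j →
      (∫ x in x₀..x₁, (w (x, y₁) - ub₄.eval x) * p.eval x) = 0)
    (G : Poly2 × Poly2) (hG : memRT j G)
    (hGdef : ∀ q : Poly2 × Poly2, memRT j q →
      (∫ z in Set.Icc x₀ x₁ ×ˢ Set.Icc y₀ y₁,
        (evalP G.1 z.1 z.2 * evalP q.1 z.1 z.2 + evalP G.2 z.1 z.2 * evalP q.2 z.1 z.2))
      = -(∫ z in Set.Icc x₀ x₁ ×ˢ Set.Icc y₀ y₁, evalP u₀ z.1 z.2 * evalP (divP q) z.1 z.2)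
        + ((∫ y in y₀..y₁, ub₁.eval y * (-(evalP q.1 x₀ y)))
          + (∫ y in y₀..y₁, ub₂.eval y * evalP q.1 x₁ y)
          + (∫ x in x₀..x₁, ub₃.eval x * (-(evalP q.2 x y₀)))
          + (∫ x in x₀..x₁, ub₄.eval x * evalP q.2 x y₁))) :
    ∀ q : Poly2 × Poly2, memRT j q →
      (∫ z in Set.Icc x₀ x₁ ×ˢ Set.Icc y₀ y₁,
        ((evalP G.1 z.1 z.2 - fderiv ℝ w z (1, 0)) * evalP q.1 z.1 z.2
          + (evalP G.2 z.1 z.2 - fderiv ℝ w z (0, 1)) * evalP q.2 z.1 z.2)) = 0 :=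
  statement2_general j x₀ x₁ y₀ y₁ hx hy w hw u₀ hu₀proj ub₁ ub₂ ub₃ ub₄ hub₁ hub₂ hub₃ hub₄ G hGdef
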